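/- Let δ : M_n(ℂ) → M_n(ℂ) be a linear map satisfying δ(ab) = δ(a)b + a·δ(b) and δ(a†) = δ(a)† for all a,b ∈ M_n(ℂ), and let ‖δ‖₂ denote its operator norm with respect to the Frobenius norm. Then for every positive semidefinite x ∈ M_n(ℂ) and every z ∈ M_n(ℂ): |tr(δ(x)·z)| ≤ 2·‖δ‖₂·tr(x)·‖z‖_op; equivalently, ‖δ(x)‖₁ ≤ 2·‖δ‖₂·‖x‖₁ for every positive semidefinite x. -/

import Mathlib

open Matrix
open scoped ComplexOrder

attribute [local instance] Matrix.frobeniusNormedAddCommGroup Matrix.frobeniusNormedSpace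

/-- Functional calculus for a matrix: apply `f : ℝ → ℝ` to a Hermitian matrix `A` via its
spectral decomposition (junk value `0` if `A` is not Hermitian). -/
noncomputable def hcfc {n : ℕ} (f : ℝ → ℝ) (A : Matrix (Fin n) (Fin n) ℂ) :
    Matrix (Fin n) (Fin n) ℂ :=
  if hA : A.IsHermitian then
    (hA.eigenvectorUnitary : Matrix (Fin n) (Fin n) ℂ) *
      Matrix.diagonal (fun i => (f (hA.eigenvalues i) : ℂ)) *
      star (hA.eigenvectorUnitary : Matrix (Fin n) (Fin n) ℂ)
  else 0

/-- The trace norm `‖y‖₁ = tr √(y†y)`. -/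
noncomputable def traceNorm {n : ℕ} (y : Matrix (Fin n) (Fin n) ℂ) : ℝ :=
  (Matrix.trace (hcfc Real.sqrt (yᴴ * y))).re

/-- The operator norm of a matrix, acting on the Euclidean space `ℂⁿ`. -/
noncomputable def opNorm {n : ℕ} (h : Matrix (Fin n) (Fin n) ℂ) : ℝ :=
  ‖Matrix.toEuclideanCLM (𝕜 := ℂ) h‖

/-- The operator norm `‖δ‖₂` of a linear endomorphism of `M_n(ℂ)` with respect to the
Frobenius norm. -/
noncomputable def frobOpNorm {n : ℕ}
    (δ : Matrix (Fin n) (Fin n) ℂ →ₗ[ℂ] Matrix (Fin n) (Fin n) ℂ) : ℝ :=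
  (ContinuousLinearMap.hasOpNorm (σ₁₂ := RingHom.id ℂ)).norm (LinearMap.toContinuousLinearMap δ)

/-! Write `x = s * s` with `s = √x`. The Leibniz rule and cyclicity of the trace give
`tr(δx z) = tr((z δs) s) + tr(δs (z s))`; Cauchy–Schwarz for the Frobenius inner product together
with `‖a b‖_F ≤ ‖a‖_op ‖b‖_F` bounds each term by `‖δ‖₂ ‖s‖_F² ‖z‖_op`, and `‖s‖_F² = tr x`.
Since `δ` commutes with `†`, `δx` is Hermitian, and its trace norm is `tr(δx z)` for the unitary
`z = sign(δx)`, so the second bound follows from the first. -/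

open scoped InnerProductSpace MatrixOrder

namespace Matrix

variable {𝕜 m n : Type*} [RCLike 𝕜] [Fintype m] [Fintype n]

/-- The Frobenius norm is the `L²` norm of the `L²` norms of the rows, so this is an isometry into
an inner product space. -/
def frobeniusToLp (A : Matrix m n 𝕜) : WithLp 2 (m → WithLp 2 (n → 𝕜)) :=
  WithLp.toLp 2 fun i => WithLp.toLp 2 (A i)

lemma norm_frobeniusToLp (A : Matrix m n 𝕜) : ‖frobeniusToLp A‖ = ‖A‖ := rfl

lemma inner_frobeniusToLp (A B : Matrix m n 𝕜) :
    ⟪frobeniusToLp A, frobeniusToLp B⟫_𝕜 = trace (Aᴴ * B) := by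
  simp only [frobeniusToLp, PiLp.inner_apply, trace, diag, mul_apply, conjTranspose_apply,
    RCLike.inner_apply]
  rw [Finset.sum_comm]
  simp only [starRingEnd_apply, mul_comm]

lemma norm_trace_mul_le (A : Matrix n m 𝕜) (B : Matrix m n 𝕜) :
    ‖trace (A * B)‖ ≤ ‖A‖ * ‖B‖ := by
  simpa [inner_frobeniusToLp, norm_frobeniusToLp] using
    norm_inner_le_norm (𝕜 := 𝕜) (frobeniusToLp Aᴴ) (frobeniusToLp B)

lemma frobenius_norm_sq_eq_re_trace (A : Matrix m n 𝕜) :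
    ‖A‖ ^ 2 = RCLike.re (trace (Aᴴ * A)) := by
  rw [← inner_frobeniusToLp, inner_self_eq_norm_sq, norm_frobeniusToLp]

lemma frobenius_norm_sq_eq_sum_rows (A : Matrix m n 𝕜) :
    ‖A‖ ^ 2 = ∑ i, ‖WithLp.toLp 2 (A i)‖ ^ 2 :=
  PiLp.norm_sq_eq_of_L2 _ (frobeniusToLp A)

end Matrix

section

variable {n : ℕ}

lemma norm_toLp_mulVec_le (A : Matrix (Fin n) (Fin n) ℂ) (v : Fin n → ℂ) :
    ‖WithLp.toLp 2 (A *ᵥ v)‖ ≤ opNorm A * ‖WithLp.toLp 2 v‖ := by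
  rw [opNorm, ← toEuclideanCLM_toLp]
  exact ContinuousLinearMap.le_opNorm _ _

lemma frobenius_norm_mul_le_opNorm_mul {l : Type*} [Fintype l]
    (A : Matrix (Fin n) (Fin n) ℂ) (B : Matrix (Fin n) l ℂ) :
    ‖A * B‖ ≤ opNorm A * ‖B‖ := by
  have hcol : (A * B)ᵀ = fun j => A *ᵥ Bᵀ j := by
    ext j i
    simp [mul_apply, mulVec, dotProduct]
  have hsq : ‖A * B‖ ^ 2 ≤ (opNorm A * ‖B‖) ^ 2 := by
    rw [← frobenius_norm_transpose, frobenius_norm_sq_eq_sum_rows, hcol, mul_pow,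
      ← frobenius_norm_transpose B, frobenius_norm_sq_eq_sum_rows, Finset.mul_sum]
    gcongr with j
    simpa only [mul_pow] using pow_le_pow_left₀ (norm_nonneg _) (norm_toLp_mulVec_le A (Bᵀ j)) 2
  exact le_of_sq_le_sq (by simpa using hsq) (by unfold opNorm; positivity)

lemma opNorm_le_one_of_star_mul_self_eq_one {z : Matrix (Fin n) (Fin n) ℂ}
    (hz : star z * z = 1) : opNorm z ≤ 1 := by
  have hU : star (toEuclideanCLM (𝕜 := ℂ) z) * toEuclideanCLM (𝕜 := ℂ) z = 1 := by
    rw [← map_star, ← map_mul, hz, map_one]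
  have hsq : opNorm z * opNorm z ≤ 1 := by
    rw [opNorm, ← CStarRing.norm_star_mul_self, hU]
    exact ContinuousLinearMap.norm_id_le
  nlinarith [show 0 ≤ opNorm z from norm_nonneg _]

lemma hcfc_eq_cfc {A : Matrix (Fin n) (Fin n) ℂ} (hA : A.IsHermitian) (f : ℝ → ℝ) :
    hcfc f A = cfc f A := by
  rw [hcfc, dif_pos hA, hA.cfc_eq, IsHermitian.cfc, Unitary.conjStarAlgAut_apply]
  rfl

lemma traceNorm_eq_re_trace_abs (y : Matrix (Fin n) (Fin n) ℂ) :
    traceNorm y = (trace (CFC.abs y)).re := by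
  rw [traceNorm, hcfc_eq_cfc (posSemidef_conjTranspose_mul_self y).isHermitian, CFC.abs,
    star_eq_conjTranspose, CFC.sqrt_eq_real_sqrt _ (posSemidef_conjTranspose_mul_self y).nonneg,
    cfcₙ_eq_cfc]

lemma traceNorm_of_posSemidef {x : Matrix (Fin n) (Fin n) ℂ} (hx : x.PosSemidef) :
    traceNorm x = (trace x).re := by
  rw [traceNorm_eq_re_trace_abs, CFC.abs_of_nonneg x hx.nonneg]

lemma exists_opNorm_le_one_mul_eq_abs {y : Matrix (Fin n) (Fin n) ℂ} (hy : y.IsHermitian) :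
    ∃ z, opNorm z ≤ 1 ∧ y * z = CFC.abs y := by
  -- `sign 0 = 1` makes `sign y` unitary.
  let sign : ℝ → ℝ := fun t => if t < 0 then -1 else 1
  have hsign : ContinuousOn sign (spectrum ℝ y) := y.finite_real_spectrum.continuousOn sign
  refine ⟨cfc sign y, opNorm_le_one_of_star_mul_self_eq_one ?_, ?_⟩
  · have hsq : (fun t => sign t * sign t) = 1 := by
      ext t
      by_cases ht : t < 0 <;> simp [sign, ht]
    rw [(cfc_predicate sign y).star_eq, ← cfc_mul sign sign y hsign hsign, hsq, Pi.one_def,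
      cfc_const_one ℝ y]
  · have habs : (fun t => t * sign t) = (‖·‖) := by
      ext t
      by_cases ht : t < 0
      · simp [sign, ht, abs_of_neg ht]
      · simp [sign, ht, abs_of_nonneg (not_lt.mp ht)]
    rw [CFC.abs_eq_cfc_norm y hy.isSelfAdjoint, ← habs,
      cfc_mul (fun t => t) sign y (by fun_prop) hsign, cfc_id' ℝ y]

lemma traceNorm_le_of_forall_opNorm_le_one {y : Matrix (Fin n) (Fin n) ℂ} (hy : y.IsHermitian)
    {C : ℝ} (h : ∀ z, opNorm z ≤ 1 → ‖trace (y * z)‖ ≤ C) : traceNorm y ≤ C := by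
  obtain ⟨z, hz, hyz⟩ := exists_opNorm_le_one_mul_eq_abs hy
  rw [traceNorm_eq_re_trace_abs, ← hyz]
  exact (Complex.re_le_norm _).trans (h z hz)

lemma frobenius_norm_sqrt_sq {x : Matrix (Fin n) (Fin n) ℂ} (hx : x.PosSemidef) :
    ‖CFC.sqrt x‖ ^ 2 = (trace x).re := by
  rw [frobenius_norm_sq_eq_re_trace, ← star_eq_conjTranspose,
    (CFC.sqrt_nonneg x).isSelfAdjoint.star_eq, CFC.sqrt_mul_sqrt_self x hx.nonneg]
  rfl

lemma frobOpNorm_nonneg (δ : Matrix (Fin n) (Fin n) ℂ →ₗ[ℂ] Matrix (Fin n) (Fin n) ℂ) :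
    0 ≤ frobOpNorm δ :=
  ContinuousLinearMap.opNorm_nonneg _

lemma norm_le_frobOpNorm_mul (δ : Matrix (Fin n) (Fin n) ℂ →ₗ[ℂ] Matrix (Fin n) (Fin n) ℂ)
    (a : Matrix (Fin n) (Fin n) ℂ) : ‖δ a‖ ≤ frobOpNorm δ * ‖a‖ :=
  (LinearMap.toContinuousLinearMap δ).le_opNorm a

lemma norm_trace_derivation_mul_self_mul_le
    (δ : Matrix (Fin n) (Fin n) ℂ →ₗ[ℂ] Matrix (Fin n) (Fin n) ℂ)
    (hLeib : ∀ a b : Matrix (Fin n) (Fin n) ℂ, δ (a * b) = δ a * b + a * δ b)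
    (s z : Matrix (Fin n) (Fin n) ℂ) :
    ‖trace (δ (s * s) * z)‖ ≤ 2 * frobOpNorm δ * ‖s‖ ^ 2 * opNorm z := by
  have hz : 0 ≤ opNorm z := norm_nonneg _
  have hsplit : trace (δ (s * s) * z) = trace (z * δ s * s) + trace (δ s * (z * s)) := by
    rw [hLeib, add_mul, trace_add]
    congr 1
    · rw [trace_mul_comm, mul_assoc]
    · rw [mul_assoc, trace_mul_comm, mul_assoc]
  calc ‖trace (δ (s * s) * z)‖ ≤ ‖z * δ s‖ * ‖s‖ + ‖δ s‖ * ‖z * s‖ := by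
        rw [hsplit]
        exact (norm_add_le _ _).trans
          (add_le_add (norm_trace_mul_le _ _) (norm_trace_mul_le _ _))
    _ ≤ opNorm z * ‖δ s‖ * ‖s‖ + ‖δ s‖ * (opNorm z * ‖s‖) := by
        gcongr <;> exact frobenius_norm_mul_le_opNorm_mul _ _
    _ = 2 * ‖δ s‖ * ‖s‖ * opNorm z := by ring
    _ ≤ 2 * (frobOpNorm δ * ‖s‖) * ‖s‖ * opNorm z := by
        gcongr
        exact norm_le_frobOpNorm_mul δ s
    _ = 2 * frobOpNorm δ * ‖s‖ ^ 2 * opNorm z := by ring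

end

/-- For a symmetric derivation `δ` on `M_n(ℂ)` and positive semidefinite `x`:
`|tr(δ(x)·z)| ≤ 2‖δ‖₂ tr(x) ‖z‖_op` for every `z`, and `‖δ(x)‖₁ ≤ 2‖δ‖₂‖x‖₁`. -/
theorem derivation_traceNorm_bound {n : ℕ}
    (δ : Matrix (Fin n) (Fin n) ℂ →ₗ[ℂ] Matrix (Fin n) (Fin n) ℂ)
    (hLeib : ∀ a b : Matrix (Fin n) (Fin n) ℂ, δ (a * b) = δ a * b + a * δ b)
    (hSym : ∀ a : Matrix (Fin n) (Fin n) ℂ, δ (star a) = star (δ a)) :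
    ∀ x : Matrix (Fin n) (Fin n) ℂ, x.PosSemidef →
      (∀ z : Matrix (Fin n) (Fin n) ℂ,
        ‖Matrix.trace (δ x * z)‖ ≤
          2 * frobOpNorm δ * (Matrix.trace x).re * opNorm z) ∧
      traceNorm (δ x) ≤ 2 * frobOpNorm δ * traceNorm x := by
  intro x hx
  have hbound (z : Matrix (Fin n) (Fin n) ℂ) :
      ‖trace (δ x * z)‖ ≤ 2 * frobOpNorm δ * (trace x).re * opNorm z := by
    simpa only [CFC.sqrt_mul_sqrt_self x hx.nonneg, frobenius_norm_sqrt_sq hx] using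
      norm_trace_derivation_mul_self_mul_le δ hLeib (CFC.sqrt x) z
  have hδx : (δ x).IsHermitian := by
    rw [IsHermitian, ← star_eq_conjTranspose, ← hSym, hx.isHermitian.isSelfAdjoint.star_eq]
  have hC : 0 ≤ 2 * frobOpNorm δ * (trace x).re := by
    have := frobOpNorm_nonneg δ
    rw [← frobenius_norm_sqrt_sq hx]
    positivity
  refine ⟨hbound, ?_⟩
  rw [traceNorm_of_posSemidef hx]
  exact traceNorm_le_of_forall_opNorm_le_one hδx fun z hz =>
    (hbound z).trans (mul_le_of_le_one_right hC hz)
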